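/- arXiv:2209.12112 — 3 statements merged into one kernel-verified Lean document; each statement's English description precedes it below -/
import Mathlib

section
/- Fix λ ∈ ℝ^n. Let G = G^1 ⊗ … ⊗ G^n and F = F^1 ⊗ … ⊗ F^n be product probability distributions on [0, x̄]^n with continuous marginal CDFs, and suppose sup_x |F^i(x) − G^i(x)| ≤ Δ for every i. Then Σ_j ( p_j(F, λ) − p_j(G, λ) )^+ = Σ_j ( p_j(G, λ) − p_j(F, λ) )^+ ≤ n Δ, where (a)^+ = max(a, 0). -/
open MeasureTheory ProbabilityTheory Real

noncomputable section

/-- CDF of a measure on `ℝ`. -/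
def mcdf (μ : Measure ℝ) (x : ℝ) : ℝ := (μ (Set.Iic x)).toReal

/-- The Laguerre cell `L_i(λ) = {x ∈ [0,x̄]^n : x_i + λ_i > x_j + λ_j ∀ j ≠ i}`. -/
def laguerre {n : ℕ} (xbar : ℝ) (lam : Fin n → ℝ) (i : Fin n) : Set (Fin n → ℝ) :=
  {x | (∀ j, x j ∈ Set.Icc (0 : ℝ) xbar) ∧ ∀ j, j ≠ i → x j + lam j < x i + lam i}

/-- `p_j(𝐅, λ) = P_{X∼𝐅}(X ∈ L_j(λ))`. -/
def pAlloc {n : ℕ} (xbar : ℝ) (μ : Measure (Fin n → ℝ)) (lam : Fin n → ℝ) (j : Fin n) : ℝ :=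
  (μ (laguerre xbar lam j)).toReal

/-!
Replace the marginals of `G` by those of `F` one coordinate at a time. When only the marginal
of coordinate `k` changes, fix the other coordinates `y`. Almost surely some `i ≠ k` is the strict
winner among them, and then coordinate `k` wins exactly when `x k` exceeds a threshold `t(y)`,
while `i` wins below it. So conditionally on `y` only the cells of `k` and `i` move, by opposite
amounts `±(Fᵏ(t) - Gᵏ(t))`, and the positive-part distance `excess` between the conditional
allocation vectors is `|Fᵏ(t) - Gᵏ(t)| ≤ Δ`. Since `excess` is convex, integrating over `y` keeps
this bound, and its triangle inequality over the `n` swaps gives `n * Δ`. Continuous CDFs make ties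
null, so every allocation vector sums to one, which gives the equality of the two sums.
-/

open Set Function

section Excess

variable {ι : Type*} [Fintype ι]

def excess (a b : ι → ℝ) : ℝ := ∑ j, max (a j - b j) 0

lemma excess_nonneg (a b : ι → ℝ) : 0 ≤ excess a b :=
  Finset.sum_nonneg fun _ _ => le_max_right _ _

lemma excess_comm_of_sum_eq {a b : ι → ℝ} (h : ∑ j, a j = ∑ j, b j) :
    excess a b = excess b a := by
  have hdiff : ∀ x y : ℝ, max (x - y) 0 - max (y - x) 0 = x - y := fun x y => by
    rcases le_total x y with hxy | hxy <;> simp [hxy]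
  rw [← sub_eq_zero, excess, excess, ← Finset.sum_sub_distrib]
  simp only [hdiff, Finset.sum_sub_distrib, h, sub_self]

lemma excess_triangle (a b c : ι → ℝ) : excess a c ≤ excess a b + excess b c := by
  rw [excess, excess, excess, ← Finset.sum_add_distrib]
  refine Finset.sum_le_sum fun j _ => max_le ?_ (by positivity)
  linarith [le_max_left (a j - b j) 0, le_max_left (b j - c j) 0]

lemma excess_integral_le {α : Type*} [MeasurableSpace α] {P : Measure α} {f g : ι → α → ℝ}
    (hf : ∀ j, Integrable (f j) P) (hg : ∀ j, Integrable (g j) P) :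
    excess (fun j => ∫ y, f j y ∂P) (fun j => ∫ y, g j y ∂P) ≤
      ∫ y, excess (fun j => f j y) (fun j => g j y) ∂P := by
  have hpos : ∀ j, Integrable (fun y => max (f j y - g j y) 0) P := fun j =>
    ((hf j).sub (hg j)).pos_part
  simp only [excess]
  rw [integral_finsetSum _ fun j _ => hpos j]
  refine Finset.sum_le_sum fun j _ => max_le ?_ (integral_nonneg fun _ => le_max_right _ _)
  rw [← integral_sub (hf j) (hg j)]
  exact integral_mono ((hf j).sub (hg j)) (hpos j) fun _ => le_max_left _ _

end Excess

section Slices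

variable {m : ℕ} {α : Fin (m + 1) → Type*} [∀ i, MeasurableSpace (α i)]

lemma measurable_measure_insertNth_preimage (k : Fin (m + 1)) (ρ : Measure (α k)) [SFinite ρ]
    {E : Set (∀ i, α i)} (hE : MeasurableSet E) :
    Measurable fun y => ρ {a | k.insertNth a y ∈ E} :=
  measurable_measure_prodMk_right ((MeasurableEquiv.piFinSuccAbove α k).symm.measurable hE)

lemma pi_apply_eq_lintegral_insertNth (μ : ∀ i, Measure (α i)) [∀ i, SigmaFinite (μ i)]
    (k : Fin (m + 1)) {E : Set (∀ i, α i)} (hE : MeasurableSet E) :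
    Measure.pi μ E =
      ∫⁻ y, μ k {a | k.insertNth a y ∈ E} ∂Measure.pi fun i => μ (k.succAbove i) := by
  set e := MeasurableEquiv.piFinSuccAbove α k
  have h := (measurePreserving_piFinSuccAbove μ k).measure_preimage_equiv (e.symm ⁻¹' E)
  rw [← preimage_comp, e.symm_comp_self, preimage_id] at h
  rw [h, Measure.prod_apply_symm (e.symm.measurable hE)]
  rfl

lemma measureReal_pi_eq_integral_insertNth (μ : ∀ i, Measure (α i))
    [∀ i, IsFiniteMeasure (μ i)] (k : Fin (m + 1)) {E : Set (∀ i, α i)} (hE : MeasurableSet E) :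
    (Measure.pi μ).real E =
      ∫ y, (μ k).real {a | k.insertNth a y ∈ E} ∂Measure.pi fun i => μ (k.succAbove i) := by
  rw [measureReal_def, pi_apply_eq_lintegral_insertNth μ k hE,
    ← integral_toReal (measurable_measure_insertNth_preimage k (μ k) hE).aemeasurable
      (ae_of_all _ fun _ => measure_lt_top _ _)]
  rfl

lemma integrable_measureReal_insertNth (k : Fin (m + 1)) (ρ : Measure (α k)) [IsFiniteMeasure ρ]
    (P : Measure (∀ i, α (k.succAbove i))) [IsFiniteMeasure P] {E : Set (∀ i, α i)}
    (hE : MeasurableSet E) : Integrable (fun y => ρ.real {a | k.insertNth a y ∈ E}) P :=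
  .of_bound (measurable_measure_insertNth_preimage k ρ hE).ennreal_toReal.aestronglyMeasurable
    (ρ.real univ) (ae_of_all _ fun _ => by
      rw [Real.norm_of_nonneg measureReal_nonneg]
      exact measureReal_mono (subset_univ _))

end Slices

section StrictArgmax

variable {n : ℕ}

def strictArgmaxSet (lam : Fin n → ℝ) (i : Fin n) : Set (Fin n → ℝ) :=
  {x | ∀ j ≠ i, x j + lam j < x i + lam i}

def winProb (μ : Fin n → Measure ℝ) (lam : Fin n → ℝ) (i : Fin n) : ℝ :=
  (Measure.pi μ).real (strictArgmaxSet lam i)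

lemma measurableSet_strictArgmaxSet (lam : Fin n → ℝ) (i : Fin n) :
    MeasurableSet (strictArgmaxSet lam i) := by
  simp only [strictArgmaxSet, ofPred_forall]
  exact .iInter fun j => .iInter fun _ => measurableSet_lt (by fun_prop) (by fun_prop)

lemma pairwise_disjoint_strictArgmaxSet (lam : Fin n → ℝ) :
    Pairwise (Disjoint on strictArgmaxSet lam) := fun i j hij =>
  disjoint_left.2 fun _ hi hj => (hi j hij.symm).asymm (hj i hij)

lemma measure_pi_tie_eq_zero (μ : Fin n → Measure ℝ) [∀ i, SigmaFinite (μ i)]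
    [∀ i, NullSingletonClass (μ i)] (lam : Fin n → ℝ) {i j : Fin n} (hij : i ≠ j) :
    Measure.pi μ {x | x i + lam i = x j + lam j} = 0 := by
  obtain ⟨m, rfl⟩ : ∃ m, n = m + 1 := Nat.exists_eq_succ_of_ne_zero i.pos.ne'
  obtain ⟨j, rfl⟩ := Fin.exists_succAbove_eq hij.symm
  have hslice (y : Fin m → ℝ) : {a | a + lam i = y j + lam (i.succAbove j)} =
      {y j + lam (i.succAbove j) - lam i} := by
    ext a
    simp [eq_sub_iff_add_eq]
  rw [pi_apply_eq_lintegral_insertNth μ i (measurableSet_eq_fun (by fun_prop) (by fun_prop))]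
  simp [hslice]

lemma ae_exists_mem_strictArgmaxSet [NeZero n] (μ : Fin n → Measure ℝ) [∀ i, SigmaFinite (μ i)]
    [∀ i, NullSingletonClass (μ i)] (lam : Fin n → ℝ) :
    ∀ᵐ x ∂Measure.pi μ, ∃ i, x ∈ strictArgmaxSet lam i := by
  have hnoTie : ∀ᵐ x ∂Measure.pi μ, ∀ i j, i ≠ j → x i + lam i ≠ x j + lam j := by
    simp only [ae_all_iff]
    intro i j hij
    exact measure_eq_zero_iff_ae_notMem.1 (measure_pi_tie_eq_zero μ lam hij)
  filter_upwards [hnoTie] with x hx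
  obtain ⟨i, -, hi⟩ := Finset.exists_max_image Finset.univ (fun j => x j + lam j)
    Finset.univ_nonempty
  exact ⟨i, fun j hj => (hi j (Finset.mem_univ j)).lt_of_ne (hx j i hj)⟩

lemma sum_winProb_eq_one [NeZero n] (μ : Fin n → Measure ℝ) [∀ i, IsProbabilityMeasure (μ i)]
    [∀ i, NullSingletonClass (μ i)] (lam : Fin n → ℝ) : ∑ i, winProb μ lam i = 1 := by
  have hU := MeasurableSet.iUnion (measurableSet_strictArgmaxSet lam)
  have hconull : Measure.pi μ (⋃ i, strictArgmaxSet lam i) = 1 := by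
    rw [← prob_compl_eq_zero_iff hU, ← mem_ae_iff]
    filter_upwards [ae_exists_mem_strictArgmaxSet μ lam] with x ⟨i, hi⟩
    exact mem_iUnion.2 ⟨i, hi⟩
  simp only [winProb]
  rw [← measureReal_iUnion_fintype (pairwise_disjoint_strictArgmaxSet lam)
    (measurableSet_strictArgmaxSet lam), measureReal_def, hconull, ENNReal.toReal_one]

end StrictArgmax

lemma measureReal_Ioi_eq_one_sub_mcdf (ρ : Measure ℝ) [IsProbabilityMeasure ρ] (t : ℝ) :
    ρ.real (Ioi t) = 1 - mcdf ρ t := by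
  rw [← compl_Iic, probReal_compl_eq_one_sub measurableSet_Iic]
  rfl

lemma measureReal_Iio_eq_mcdf (ρ : Measure ℝ) [NullSingletonClass ρ] (t : ℝ) :
    ρ.real (Iio t) = mcdf ρ t :=
  measureReal_congr Iio_ae_eq_Iic

section OneCoordinate

variable {m : ℕ} {lam : Fin (m + 1) → ℝ} {k : Fin (m + 1)} {y : Fin m → ℝ}

lemma insertNth_mem_strictArgmaxSet_self {a : ℝ} :
    k.insertNth a y ∈ strictArgmaxSet lam k ↔ ∀ i, y i + lam (k.succAbove i) < a + lam k := by
  simp [strictArgmaxSet, k.forall_iff_succAbove, k.succAbove_ne]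

lemma insertNth_mem_strictArgmaxSet_succAbove {a : ℝ} {i : Fin m} :
    k.insertNth a y ∈ strictArgmaxSet lam (k.succAbove i) ↔
      a + lam k < y i + lam (k.succAbove i) ∧ y ∈ strictArgmaxSet (lam ∘ k.succAbove) i := by
  simp [strictArgmaxSet, k.forall_iff_succAbove, (k.succAbove_ne i).symm]

variable {w : Fin m}

lemma slice_strictArgmaxSet_self (hw : y ∈ strictArgmaxSet (lam ∘ k.succAbove) w) :
    {a | k.insertNth a y ∈ strictArgmaxSet lam k} = Ioi (y w + lam (k.succAbove w) - lam k) := by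
  ext a
  simp only [mem_ofPred_eq, insertNth_mem_strictArgmaxSet_self, mem_Ioi, sub_lt_iff_lt_add]
  refine ⟨fun h => h w, fun h i => ?_⟩
  rcases eq_or_ne i w with rfl | hi
  · exact h
  · exact (hw i hi).trans h

lemma slice_strictArgmaxSet_succAbove_self (hw : y ∈ strictArgmaxSet (lam ∘ k.succAbove) w) :
    {a | k.insertNth a y ∈ strictArgmaxSet lam (k.succAbove w)} =
      Iio (y w + lam (k.succAbove w) - lam k) := by
  ext a
  simp [insertNth_mem_strictArgmaxSet_succAbove, hw, lt_sub_iff_add_lt]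

lemma slice_strictArgmaxSet_succAbove_of_ne (hw : y ∈ strictArgmaxSet (lam ∘ k.succAbove) w)
    {i : Fin m} (hi : i ≠ w) : {a | k.insertNth a y ∈ strictArgmaxSet lam (k.succAbove i)} = ∅ := by
  ext a
  simp only [mem_ofPred_eq, insertNth_mem_strictArgmaxSet_succAbove, mem_empty_iff_false,
    iff_false, not_and]
  exact fun _ hi' => (pairwise_disjoint_strictArgmaxSet _ hi).ne_of_mem hi' hw rfl

end OneCoordinate

def condWinProb {m : ℕ} (ρ : Measure ℝ) (lam : Fin (m + 1) → ℝ) (k : Fin (m + 1)) (y : Fin m → ℝ)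
    (j : Fin (m + 1)) : ℝ :=
  ρ.real {a | k.insertNth a y ∈ strictArgmaxSet lam j}

section Hybrid

variable {m : ℕ} (lam : Fin (m + 1) → ℝ)

lemma winProb_eq_integral_condWinProb (μ : Fin (m + 1) → Measure ℝ)
    [∀ i, IsProbabilityMeasure (μ i)] (k : Fin (m + 1)) :
    winProb μ lam =
      fun j => ∫ y, condWinProb (μ k) lam k y j ∂Measure.pi fun i => μ (k.succAbove i) :=
  funext fun j => measureReal_pi_eq_integral_insertNth μ k (measurableSet_strictArgmaxSet lam j)

lemma integrable_condWinProb (ρ : Measure ℝ) [IsFiniteMeasure ρ] (P : Measure (Fin m → ℝ))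
    [IsFiniteMeasure P] (k j : Fin (m + 1)) : Integrable (fun y => condWinProb ρ lam k y j) P :=
  integrable_measureReal_insertNth (α := fun _ => ℝ) k ρ P (measurableSet_strictArgmaxSet lam j)

lemma excess_condWinProb_eq (μ ν : Measure ℝ) [IsProbabilityMeasure μ] [IsProbabilityMeasure ν]
    [NullSingletonClass μ] [NullSingletonClass ν] {k : Fin (m + 1)} {y : Fin m → ℝ} {w : Fin m}
    (hw : y ∈ strictArgmaxSet (lam ∘ k.succAbove) w) :
    let t := y w + lam (k.succAbove w) - lam k
    excess (condWinProb ν lam k y) (condWinProb μ lam k y) = |mcdf ν t - mcdf μ t| := by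
  rw [excess, Fin.sum_univ_succAbove _ k, Finset.sum_eq_single w
    (fun i _ hi => by simp [condWinProb, slice_strictArgmaxSet_succAbove_of_ne hw hi]) (by simp)]
  simp only [condWinProb, slice_strictArgmaxSet_self hw, slice_strictArgmaxSet_succAbove_self hw,
    measureReal_Ioi_eq_one_sub_mcdf, measureReal_Iio_eq_mcdf]
  rw [← max_zero_add_max_neg_zero_eq_abs_self, add_comm]
  ring_nf

lemma excess_winProb_le_of_forall_ne {μ ν : Fin (m + 1) → Measure ℝ}
    [∀ i, IsProbabilityMeasure (μ i)] [∀ i, IsProbabilityMeasure (ν i)]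
    [∀ i, NullSingletonClass (μ i)] [∀ i, NullSingletonClass (ν i)]
    {k : Fin (m + 1)} (hagree : ∀ i ≠ k, ν i = μ i) {Δ : ℝ}
    (hclose : ∀ x, |mcdf (ν k) x - mcdf (μ k) x| ≤ Δ) :
    excess (winProb ν lam) (winProb μ lam) ≤ Δ := by
  cases m with
  | zero =>
    have hν := sum_winProb_eq_one ν lam
    have hμ := sum_winProb_eq_one μ lam
    rw [Fin.sum_univ_one] at hν hμ
    simpa [excess, hν, hμ] using (abs_nonneg _).trans (hclose 0)
  | succ m =>
    set P := Measure.pi fun i => μ (k.succAbove i)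
    have hP : (Measure.pi fun i => ν (k.succAbove i)) = P :=
      congrArg Measure.pi (funext fun i => hagree _ (k.succAbove_ne i))
    have hslices :
        ∀ᵐ y ∂P, excess (condWinProb (ν k) lam k y) (condWinProb (μ k) lam k y) ≤ Δ := by
      filter_upwards [ae_exists_mem_strictArgmaxSet _ (lam ∘ k.succAbove)] with y ⟨w, hw⟩
      exact (excess_condWinProb_eq lam (μ k) (ν k) hw).trans_le (hclose _)
    rw [winProb_eq_integral_condWinProb lam ν k, hP, winProb_eq_integral_condWinProb lam μ k]
    calc _ ≤ ∫ y, excess (condWinProb (ν k) lam k y) (condWinProb (μ k) lam k y) ∂P :=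
          excess_integral_le (integrable_condWinProb lam (ν k) P k)
            (integrable_condWinProb lam (μ k) P k)
      _ ≤ ∫ _, Δ ∂P := integral_mono_of_nonneg (ae_of_all _ fun _ => excess_nonneg _ _)
          (integrable_const Δ) hslices
      _ = Δ := by simp

lemma excess_winProb_piecewise_le (F G : Fin (m + 1) → Measure ℝ)
    [∀ i, IsProbabilityMeasure (F i)] [∀ i, IsProbabilityMeasure (G i)]
    [∀ i, NullSingletonClass (F i)] [∀ i, NullSingletonClass (G i)] {Δ : ℝ}
    (hclose : ∀ i x, |mcdf (F i) x - mcdf (G i) x| ≤ Δ) (s : Finset (Fin (m + 1))) :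
    excess (winProb (s.piecewise F G) lam) (winProb G lam) ≤ s.card * Δ := by
  have (t : Finset (Fin (m + 1))) (i) : IsProbabilityMeasure (t.piecewise F G i) :=
    t.piecewise_cases F G IsProbabilityMeasure inferInstance inferInstance
  have (t : Finset (Fin (m + 1))) (i) : NullSingletonClass (t.piecewise F G i) :=
    t.piecewise_cases F G NullSingletonClass inferInstance inferInstance
  induction s using Finset.induction_on with
  | empty => simp [excess]
  | insert k s hk ih =>
    have hstep : excess (winProb ((insert k s).piecewise F G) lam)
        (winProb (s.piecewise F G) lam) ≤ Δ :=
      excess_winProb_le_of_forall_ne lam (fun i hi => s.piecewise_insert_of_ne F G hi)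
        (by simpa [Finset.piecewise_eq_of_notMem _ _ _ hk] using hclose k)
    calc _ ≤ excess (winProb ((insert k s).piecewise F G) lam) (winProb (s.piecewise F G) lam)
          + excess (winProb (s.piecewise F G) lam) (winProb G lam) := excess_triangle _ _ _
      _ ≤ Δ + s.card * Δ := add_le_add hstep ih
      _ = (insert k s).card * Δ := by rw [Finset.card_insert_of_notMem hk]; push_cast; ring

end Hybrid

lemma nullSingletonClass_of_continuous_mcdf {ρ : Measure ℝ} [IsProbabilityMeasure ρ]
    (h : Continuous (mcdf ρ)) : NullSingletonClass ρ := by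
  have hcdf : Continuous (cdf ρ) := h.congr fun x => (cdf_eq_real ρ x).symm
  refine ⟨fun a => ?_⟩
  rw [← measure_cdf (μ := ρ), StieltjesFunction.measure_singleton,
    hcdf.continuousWithinAt.leftLim_eq, sub_self, ENNReal.ofReal_zero]

lemma pAlloc_pi_eq_winProb {n : ℕ} {xbar : ℝ} (μ : Fin n → Measure ℝ)
    [∀ i, IsProbabilityMeasure (μ i)] (hsupp : ∀ i, μ i (Icc 0 xbar) = 1) (lam : Fin n → ℝ) :
    pAlloc xbar (Measure.pi μ) lam = winProb μ lam := by
  have hcube : Measure.pi μ (univ.pi fun _ => Icc 0 xbar)ᶜ = 0 := by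
    rw [prob_compl_eq_zero_iff (.univ_pi fun _ => measurableSet_Icc), Measure.pi_pi]
    simp [hsupp]
  have hlaguerre (j) :
      laguerre xbar lam j = strictArgmaxSet lam j ∩ univ.pi fun _ => Icc 0 xbar := by
    ext x
    simp only [laguerre, strictArgmaxSet, mem_inter_iff, mem_pi, mem_univ, true_implies,
      mem_ofPred_eq, and_comm]
  funext j
  rw [pAlloc, winProb, hlaguerre, measureReal_def, measure_inter_conull hcube]

theorem allocation_size_closeness_general
    {n : ℕ} (xbar Δ : ℝ)
    (lam : Fin n → ℝ)
    (Fm Gm : Fin n → Measure ℝ)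
    [∀ j, IsProbabilityMeasure (Fm j)] [∀ j, IsProbabilityMeasure (Gm j)]
    (hFsupp : ∀ j, Fm j (Set.Icc (0 : ℝ) xbar) = 1)
    (hGsupp : ∀ j, Gm j (Set.Icc (0 : ℝ) xbar) = 1)
    (hFcont : ∀ j, Continuous (mcdf (Fm j)))
    (hGcont : ∀ j, Continuous (mcdf (Gm j)))
    (hclose : ∀ j x, |mcdf (Fm j) x - mcdf (Gm j) x| ≤ Δ) :
    (∑ j, max (pAlloc xbar (Measure.pi Fm) lam j - pAlloc xbar (Measure.pi Gm) lam j) 0 =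
        ∑ j, max (pAlloc xbar (Measure.pi Gm) lam j - pAlloc xbar (Measure.pi Fm) lam j) 0) ∧
      ∑ j, max (pAlloc xbar (Measure.pi Fm) lam j - pAlloc xbar (Measure.pi Gm) lam j) 0 ≤
        n * Δ := by
  cases n with
  | zero => simp
  | succ m =>
    have := fun j => nullSingletonClass_of_continuous_mcdf (hFcont j)
    have := fun j => nullSingletonClass_of_continuous_mcdf (hGcont j)
    change excess _ _ = excess _ _ ∧ excess _ _ ≤ _
    rw [pAlloc_pi_eq_winProb Fm hFsupp, pAlloc_pi_eq_winProb Gm hGsupp]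
    refine ⟨excess_comm_of_sum_eq (by rw [sum_winProb_eq_one, sum_winProb_eq_one]), ?_⟩
    simpa using excess_winProb_piecewise_le lam Fm Gm hclose Finset.univ

/-- If `G = G¹ ⊗ … ⊗ Gⁿ` and `F = F¹ ⊗ … ⊗ Fⁿ` are product distributions on `[0,x̄]^n` with
continuous marginal CDFs satisfying `sup_x |Fʲ(x) − Gʲ(x)| ≤ Δ` for each `j`, then for any
fixed greedy policy `λ`,
`∑_j (p_j(F,λ) − p_j(G,λ))⁺ = ∑_j (p_j(G,λ) − p_j(F,λ))⁺ ≤ n Δ`. -/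
theorem allocation_size_closeness
    {n : ℕ} (xbar Δ : ℝ) (hxbar : 0 < xbar)
    (lam : Fin n → ℝ)
    (Fm Gm : Fin n → Measure ℝ)
    [∀ j, IsProbabilityMeasure (Fm j)] [∀ j, IsProbabilityMeasure (Gm j)]
    (hFsupp : ∀ j, Fm j (Set.Icc (0 : ℝ) xbar) = 1)
    (hGsupp : ∀ j, Gm j (Set.Icc (0 : ℝ) xbar) = 1)
    (hFcont : ∀ j, Continuous (mcdf (Fm j)))
    (hGcont : ∀ j, Continuous (mcdf (Gm j)))
    (hclose : ∀ j x, |mcdf (Fm j) x - mcdf (Gm j) x| ≤ Δ) :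
    (∑ j, max (pAlloc xbar (Measure.pi Fm) lam j - pAlloc xbar (Measure.pi Gm) lam j) 0 =
        ∑ j, max (pAlloc xbar (Measure.pi Gm) lam j - pAlloc xbar (Measure.pi Fm) lam j) 0) ∧
      ∑ j, max (pAlloc xbar (Measure.pi Fm) lam j - pAlloc xbar (Measure.pi Gm) lam j) 0 ≤
        n * Δ :=
  allocation_size_closeness_general xbar Δ lam Fm Gm hFsupp hGsupp hFcont hGcont hclose
end
end

section
/- Let λ, λ' ∈ ℝ^n and let F be a probability distribution on [0, x̄]^n that assigns probability zero to the tie sets { x : x_j + λ_j = x_k + λ_k for some j ≠ k } and { x : x_j + λ'_j = x_k + λ'_k for some j ≠ k }. If Σ_j ( p_j(F, λ') − p_j(F, λ) )^+ ≤ Δ, then for every j, P_{X∼F}( X ∈ L_j(λ') \\ L_j(λ) ) ≤ Δ. -/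
open MeasureTheory ProbabilityTheory Real

noncomputable section

lemma measurableSet_laguerre {n : ℕ} (xbar : ℝ) (lam : Fin n → ℝ) (i : Fin n) :
    MeasurableSet (laguerre xbar lam i) := by
  have h : laguerre xbar lam i =
      (⋂ j, (fun x : Fin n → ℝ => x j) ⁻¹' Set.Icc 0 xbar) ∩
      (⋂ j, ⋂ _ : j ≠ i, {x : Fin n → ℝ | x j + lam j < x i + lam i}) := by
    ext x
    simp [laguerre, Set.mem_iInter]
  rw [h]
  refine MeasurableSet.inter
    (MeasurableSet.iInter fun j => (measurable_pi_apply j) measurableSet_Icc)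
    (MeasurableSet.iInter fun j => MeasurableSet.iInter fun _ =>
      measurableSet_lt ((measurable_pi_apply j).add_const _)
        ((measurable_pi_apply i).add_const _))

lemma laguerre_disjoint {n : ℕ} (xbar : ℝ) (lam : Fin n → ℝ) {i k : Fin n} (h : i ≠ k) :
    Disjoint (laguerre xbar lam i) (laguerre xbar lam k) := by
  rw [Set.disjoint_left]
  rintro x ⟨_, hi⟩ ⟨_, hk⟩
  have h1 := hi k (Ne.symm h)
  have h2 := hk i h
  linarith

lemma laguerre_cover {n : ℕ} (xbar : ℝ) (lam : Fin n → ℝ) (j : Fin n) (x : Fin n → ℝ)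
    (hx : ∀ j, x j ∈ Set.Icc (0 : ℝ) xbar)
    (hnt : ¬ ∃ a b, a ≠ b ∧ x a + lam a = x b + lam b) :
    ∃ i, x ∈ laguerre xbar lam i := by
  obtain ⟨i, -, hmax⟩ := Finset.exists_max_image Finset.univ (fun i => x i + lam i)
    ⟨j, Finset.mem_univ j⟩
  refine ⟨i, hx, fun k hk => ?_⟩
  rcases lt_or_eq_of_le (hmax k (Finset.mem_univ k)) with h | h
  · exact h
  · exact absurd ⟨k, i, hk, h⟩ hnt

/-- If `F` is a distribution on `[0,x̄]^n` assigning probability zero to the tie sets of both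
`λ` and `λ'`, and `∑_j (p_j(F,λ') − p_j(F,λ))⁺ ≤ Δ`, then for every `j`,
`P_{X∼F}(X ∈ L_j(λ') \ L_j(λ)) ≤ Δ`. -/
theorem allocation_difference_bound
    {n : ℕ} (xbar Δ : ℝ)
    (μ : Measure (Fin n → ℝ)) [IsProbabilityMeasure μ]
    (hsupp : μ {x | ∀ j, x j ∈ Set.Icc (0 : ℝ) xbar} = 1)
    (lam lam' : Fin n → ℝ)
    (hties : μ {x | ∃ j k, j ≠ k ∧ x j + lam j = x k + lam k} = 0)
    (hties' : μ {x | ∃ j k, j ≠ k ∧ x j + lam' j = x k + lam' k} = 0)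
    (hΔ : ∑ j, max (pAlloc xbar μ lam' j - pAlloc xbar μ lam j) 0 ≤ Δ) :
    ∀ j, (μ (laguerre xbar lam' j \ laguerre xbar lam j)).toReal ≤ Δ := by
  intro j
  classical
  set d : Fin n → ℝ := fun i => lam' i - lam i with hd
  set T : Finset (Fin n) := Finset.univ.filter (fun i => d j ≤ d i) with hT
  set A : Set (Fin n → ℝ) := ⋃ k ∈ T, laguerre xbar lam' k with hA
  set B : Set (Fin n → ℝ) := ⋃ i ∈ T, laguerre xbar lam i with hB
  have hAm : MeasurableSet A :=
    MeasurableSet.biUnion T.countable_toSet (fun k _ => measurableSet_laguerre _ _ _)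
  have hBm : MeasurableSet B :=
    MeasurableSet.biUnion T.countable_toSet (fun k _ => measurableSet_laguerre _ _ _)
  -- key: if x is in the λ'-cell of k and the λ-cell of i with i ≠ k, then d i < d k
  have key : ∀ (x : Fin n → ℝ) (i k : Fin n), i ≠ k → x ∈ laguerre xbar lam' k →
      x ∈ laguerre xbar lam i → d i < d k := by
    rintro x i k hik ⟨-, hk⟩ ⟨-, hi⟩
    have h1 := hk i hik
    have h2 := hi k (Ne.symm hik)
    simp only [hd]
    linarith
  have hjT : j ∈ T := by simp [hT]
  -- L'_j \ L_j ⊆ (A \ B) ∪ ties(λ)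
  have hsub1 : laguerre xbar lam' j \ laguerre xbar lam j ⊆
      (A \ B) ∪ {x | ∃ a b, a ≠ b ∧ x a + lam a = x b + lam b} := by
    rintro x ⟨hxj', hxj⟩
    by_cases hnt : ∃ a b, a ≠ b ∧ x a + lam a = x b + lam b
    · exact Or.inr hnt
    · left
      obtain ⟨k, hk⟩ := laguerre_cover xbar lam j x hxj'.1 hnt
      have hkj : k ≠ j := by rintro rfl; exact hxj hk
      have hdk : d k < d j := key x k j hkj hxj' hk
      refine ⟨Set.mem_biUnion hjT hxj', ?_⟩
      intro hxB
      obtain ⟨i, hiT, hxi⟩ := Set.mem_iUnion₂.mp hxB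
      have hik : i ≠ k := by
        rintro rfl
        have : d j ≤ d i := by simpa [hT] using hiT
        linarith
      exact Set.disjoint_left.mp (laguerre_disjoint xbar lam hik) hxi hk
  -- B \ A ⊆ ties(λ')
  have hsub2 : B \ A ⊆ {x | ∃ a b, a ≠ b ∧ x a + lam' a = x b + lam' b} := by
    rintro x ⟨hxB, hxA⟩
    obtain ⟨i, hiT, hxi⟩ := Set.mem_iUnion₂.mp hxB
    by_contra hnt
    obtain ⟨k, hk⟩ := laguerre_cover xbar lam' j x hxi.1 hnt
    have hdji : d j ≤ d i := by simpa [hT] using hiT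
    have hkT : k ∈ T := by
      by_cases hki : k = i
      · subst hki; exact hiT
      · have : d i < d k := key x i k (Ne.symm hki) hk hxi
        simp only [hT, Finset.mem_filter, Finset.mem_univ, true_and]
        linarith
    exact hxA (Set.mem_biUnion hkT hk)
  have hμ1 : μ (laguerre xbar lam' j \ laguerre xbar lam j) ≤ μ (A \ B) := by
    calc μ (laguerre xbar lam' j \ laguerre xbar lam j)
        ≤ μ ((A \ B) ∪ {x | ∃ a b, a ≠ b ∧ x a + lam a = x b + lam b}) :=
          measure_mono hsub1
      _ ≤ μ (A \ B) + μ {x | ∃ a b, a ≠ b ∧ x a + lam a = x b + lam b} :=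
          measure_union_le _ _
      _ = μ (A \ B) := by rw [hties, add_zero]
  have hμ2 : μ (B \ A) = 0 := measure_mono_null hsub2 hties'
  have hAB : μ (A ∩ B) + μ (A \ B) = μ A := measure_inter_add_diff A hBm
  have hBA : μ (B ∩ A) + μ (B \ A) = μ B := measure_inter_add_diff B hAm
  have hABeq : μ (A ∩ B) = μ B := by
    rw [Set.inter_comm]
    rw [hμ2, add_zero] at hBA
    exact hBA
  -- sums
  have hAr : (μ A).toReal = ∑ k ∈ T, pAlloc xbar μ lam' k := by
    rw [hA, measure_biUnion_finset (fun a _ b _ hab => laguerre_disjoint xbar lam' hab)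
      (fun k _ => measurableSet_laguerre _ _ _),
      ENNReal.toReal_sum (fun k _ => measure_ne_top μ _)]
    rfl
  have hBr : (μ B).toReal = ∑ k ∈ T, pAlloc xbar μ lam k := by
    rw [hB, measure_biUnion_finset (fun a _ b _ hab => laguerre_disjoint xbar lam hab)
      (fun k _ => measurableSet_laguerre _ _ _),
      ENNReal.toReal_sum (fun k _ => measure_ne_top μ _)]
    rfl
  have hdiff : (μ (A \ B)).toReal = (μ A).toReal - (μ B).toReal := by
    have := congrArg ENNReal.toReal hAB
    rw [ENNReal.toReal_add (measure_ne_top μ _) (measure_ne_top μ _)] at this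
    have h2 := congrArg ENNReal.toReal hABeq
    linarith
  calc (μ (laguerre xbar lam' j \ laguerre xbar lam j)).toReal
      ≤ (μ (A \ B)).toReal := ENNReal.toReal_mono (measure_ne_top μ _) hμ1
    _ = ∑ k ∈ T, (pAlloc xbar μ lam' k - pAlloc xbar μ lam k) := by
        rw [hdiff, hAr, hBr, Finset.sum_sub_distrib]
    _ ≤ ∑ k ∈ T, max (pAlloc xbar μ lam' k - pAlloc xbar μ lam k) 0 :=
        Finset.sum_le_sum fun k _ => le_max_left _ _
    _ ≤ ∑ k, max (pAlloc xbar μ lam' k - pAlloc xbar μ lam k) 0 :=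
        Finset.sum_le_sum_of_subset_of_nonneg (Finset.subset_univ T)
          (fun k _ _ => le_max_right _ _)
    _ ≤ Δ := hΔ
end
end

section
/- Fix λ ∈ ℝ^n, an index i, and Δ > 0. Let F be a continuous CDF of a probability distribution supported in [0, x̄]. Let r be any probability measure on [0, x̄]² whose second marginal has CDF F and whose first marginal has CDF F_r satisfying sup_x | F(x) − F_r(x) | ≤ Δ. Then ∫ x · Π_{j≠i} F( x̃ + λ_i − λ_j ) dr(x̃, x) − ∫ x · Π_{j≠i} F( x + λ_i − λ_j ) dF(x) ≤ x̄ Δ. -/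
/-!
Agent `i` wins exactly when its report exceeds the highest shifted competing value
`max_{j ≠ i} (X_j - λ_i + λ_j)`, whose law `Q` has CDF `G(x) = ∏_{j ≠ i} F(x + λ_i - λ_j)`;
`Q` is atomless because `F` is continuous. With the Myerson payment `P(x) = ∫_{t < x} t⁺ dQ(t)`
the allocation rule `G` is incentive compatible: `y G(a) - P(a) ≤ y G(y) - P(y)` for every value
`y ≥ 0` and report `a`. Integrating this against `r` bounds the gain by `∫ P dF_r - ∫ P dF`,
which Fubini turns into `∫ t⁺ (F(t) - F_r(t)) dQ(t)`; the integrand is at most `x̄ Δ` because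
`F_r = F = 1` beyond `x̄`.
-/

open MeasureTheory ProbabilityTheory Real

noncomputable section

open Set Filter

section Cdf

variable {μ : Measure ℝ} [IsProbabilityMeasure μ]

lemma mcdf_eq_cdf : mcdf μ = cdf μ := funext fun x => (cdf_eq_real μ x).symm

lemma mcdf_le_one (x : ℝ) : mcdf μ x ≤ 1 := measureReal_le_one

lemma prob_Iic_eq_one_of_prob_Icc_eq_one {a b : ℝ} (h : μ (Icc a b) = 1) : μ (Iic b) = 1 :=
  le_antisymm prob_le_one (h ▸ measure_mono Icc_subset_Iic_self)

lemma mcdf_eq_one_of_le {b t : ℝ} (hb : μ (Iic b) = 1) (hbt : b ≤ t) : mcdf μ t = 1 := by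
  rw [mcdf, le_antisymm prob_le_one (hb ▸ measure_mono (Iic_subset_Iic.2 hbt)),
    ENNReal.toReal_one]

lemma ae_le_of_mcdf_eq_one {b : ℝ} (hb : mcdf μ b = 1) : ∀ᵐ t ∂μ, t ≤ b :=
  (ae_iff_prob_eq_one (measurableSet_setOfPred.1 measurableSet_Iic)).2 <|
    (ENNReal.toReal_eq_one_iff _).1 hb

lemma measureReal_Iio_eq_mcdf_s9 {x : ℝ} (hx : ContinuousAt (mcdf μ) x) :
    μ.real (Iio x) = mcdf μ x := by
  rw [mcdf_eq_cdf] at hx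
  have hleft : Function.leftLim (cdf μ) x = cdf μ x :=
    (cdf μ).mono.continuousWithinAt_Iio_iff_leftLim_eq.1 hx.continuousWithinAt
  have hatom : μ {x} = 0 := by
    rw [← measure_cdf μ, StieltjesFunction.measure_singleton, hleft, sub_self,
      ENNReal.ofReal_zero]
  exact measureReal_congr (Iio_ae_eq_Iic' hatom)

lemma measureReal_Ioi_eq_one_sub_mcdf_s9 (t : ℝ) : μ.real (Ioi t) = 1 - mcdf μ t := by
  rw [← compl_Iic, probReal_compl_eq_one_sub measurableSet_Iic]
  rfl

end Cdf

lemma integrable_max_zero_of_ae_le {Q : Measure ℝ} [IsFiniteMeasure Q] {b : ℝ}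
    (h : ∀ᵐ t ∂Q, t ≤ b) : Integrable (fun t => max t 0) Q :=
  Integrable.of_bound (by fun_prop) (max b 0) (h.mono fun t ht => by
    rw [Real.norm_of_nonneg (le_max_right t 0)]
    exact max_le_max_right 0 ht)

lemma integral_setIntegral_Iio {ν Q : Measure ℝ} [IsFiniteMeasure ν] [SFinite Q] {g : ℝ → ℝ}
    (hg : Integrable g Q) :
    ∫ x, (∫ t in Iio x, g t ∂Q) ∂ν = ∫ t, ν.real (Ioi t) * g t ∂Q := by
  have hint : Integrable (Function.uncurry fun x t => (Iio x).indicator g t) (ν.prod Q) :=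
    (hg.comp_snd ν).indicator (measurableSet_lt measurable_snd measurable_fst)
  simp_rw [← integral_indicator measurableSet_Iio]
  rw [integral_integral_swap hint]
  exact integral_congr_ae (Eventually.of_forall fun t =>
    integral_indicator_const (g t) measurableSet_Ioi)

lemma integrable_measureReal_Ioi_mul {Q : Measure ℝ} {g : ℝ → ℝ} (hg : Integrable g Q)
    (ρ : Measure ℝ) [IsProbabilityMeasure ρ] : Integrable (fun t => ρ.real (Ioi t) * g t) Q :=
  hg.bdd_mul (c := 1)
    (Antitone.measurable fun _ _ hab =>
      measureReal_mono (Ioi_subset_Ioi hab)).aestronglyMeasurable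
    (Eventually.of_forall fun _ => by
      rw [Real.norm_of_nonneg measureReal_nonneg]; exact measureReal_le_one)

section SupShiftLaw

variable {ι : Type*} [Fintype ι] [Nonempty ι]

def supShiftLaw (μ : ι → Measure ℝ) (c : ι → ℝ) : Measure ℝ :=
  (Measure.pi μ).map fun z => Finset.univ.sup' Finset.univ_nonempty fun j => z j - c j

lemma measurable_sup'_sub (c : ι → ℝ) :
    Measurable fun z : ι → ℝ => Finset.univ.sup' Finset.univ_nonempty fun j => z j - c j := by
  fun_prop

instance (μ : ι → Measure ℝ) [∀ j, IsProbabilityMeasure (μ j)] (c : ι → ℝ) :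
    IsProbabilityMeasure (supShiftLaw μ c) :=
  Measure.isProbabilityMeasure_map (measurable_sup'_sub c).aemeasurable

lemma mcdf_supShiftLaw (μ : ι → Measure ℝ) [∀ j, SigmaFinite (μ j)] (c : ι → ℝ) (x : ℝ) :
    mcdf (supShiftLaw μ c) x = ∏ j, mcdf (μ j) (x + c j) := by
  have hpre : (fun z : ι → ℝ => Finset.univ.sup' Finset.univ_nonempty fun j => z j - c j) ⁻¹'
      Iic x = univ.pi fun j => Iic (x + c j) := by
    ext z
    simp [Pi.le_def]
  rw [mcdf, supShiftLaw, Measure.map_apply (measurable_sup'_sub c) measurableSet_Iic, hpre,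
    Measure.pi_pi, ENNReal.toReal_prod]
  rfl

lemma continuous_mcdf_supShiftLaw (μ : ι → Measure ℝ) [∀ j, SigmaFinite (μ j)] (c : ι → ℝ)
    (hμ : ∀ j, Continuous (mcdf (μ j))) : Continuous (mcdf (supShiftLaw μ c)) := by
  rw [funext (mcdf_supShiftLaw μ c)]
  exact continuous_finsetProd _ fun j _ => (hμ j).comp (continuous_add_const (c j))

lemma integrable_max_zero_supShiftLaw (μ : ι → Measure ℝ) [∀ j, IsProbabilityMeasure (μ j)]
    (c : ι → ℝ) {b : ℝ} (hb : ∀ j, μ j (Iic b) = 1) :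
    Integrable (fun t => max t 0) (supShiftLaw μ c) := by
  refine integrable_max_zero_of_ae_le (b := b + ∑ j, |c j|) (ae_le_of_mcdf_eq_one ?_)
  rw [mcdf_supShiftLaw]
  refine Finset.prod_eq_one fun j _ => mcdf_eq_one_of_le (hb j) ?_
  linarith [neg_abs_le (c j),
    Finset.single_le_sum (fun k _ => abs_nonneg (c k)) (Finset.mem_univ j)]

end SupShiftLaw

section Payment

def myersonPayment (Q : Measure ℝ) (x : ℝ) : ℝ := ∫ t in Iio x, max t 0 ∂Q

variable {Q : Measure ℝ}

lemma myersonPayment_add_setIntegral_Ico (hQ : Integrable (fun t => max t 0) Q) {a b : ℝ}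
    (hab : a ≤ b) :
    myersonPayment Q b = myersonPayment Q a + ∫ t in Ico a b, max t 0 ∂Q := by
  rw [myersonPayment, myersonPayment, ← setIntegral_union
    ((Iio_disjoint_Ici le_rfl).mono_right Ico_subset_Ici_self) measurableSet_Ico
    hQ.integrableOn hQ.integrableOn, Iio_union_Ico_eq_Iio hab]

lemma myersonPayment_mono (hQ : Integrable (fun t => max t 0) Q) :
    Monotone (myersonPayment Q) := fun a b hab => by
  rw [myersonPayment_add_setIntegral_Ico hQ hab, le_add_iff_nonneg_right]
  exact setIntegral_nonneg measurableSet_Ico fun t _ => le_max_right t 0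

lemma integrable_myersonPayment (hQ : Integrable (fun t => max t 0) Q) (ν : Measure ℝ)
    [IsFiniteMeasure ν] :
    Integrable (myersonPayment Q) ν := by
  refine Integrable.of_bound (myersonPayment_mono hQ).measurable.aestronglyMeasurable
    (∫ t, max t 0 ∂Q) (Eventually.of_forall fun x => ?_)
  have hnonneg : ∀ t : ℝ, 0 ≤ max t 0 := fun t => le_max_right t 0
  rw [myersonPayment,
    Real.norm_of_nonneg (setIntegral_nonneg measurableSet_Iio fun t _ => hnonneg t)]
  exact setIntegral_le_integral hQ (Eventually.of_forall hnonneg)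

lemma mul_measureReal_Iio_sub_myersonPayment_le [IsFiniteMeasure Q]
    (hQ : Integrable (fun t => max t 0) Q) {a y : ℝ} (hy : 0 ≤ y) :
    y * Q.real (Iio a) - myersonPayment Q a ≤ y * Q.real (Iio y) - myersonPayment Q y := by
  have hsplit : ∀ {u v : ℝ}, u ≤ v → Q.real (Iio v) = Q.real (Iio u) + Q.real (Ico u v) :=
    fun huv => by
      rw [← Iio_union_Ico_eq_Iio huv, measureReal_union
        ((Iio_disjoint_Ici le_rfl).mono_right Ico_subset_Ici_self) measurableSet_Ico]
  rcases le_total y a with h | h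
  · have hgain : y * Q.real (Ico y a) ≤ ∫ t in Ico y a, max t 0 ∂Q :=
      setIntegral_ge_of_const_le_real measurableSet_Ico (measure_ne_top _ _)
        (fun t ht => ht.1.trans (le_max_left t 0)) hQ.integrableOn
    rw [myersonPayment_add_setIntegral_Ico hQ h, hsplit h]
    linarith
  · have hloss : ∫ t in Ico a y, max t 0 ∂Q ≤ ∫ t in Ico a y, y ∂Q :=
      setIntegral_mono_on hQ.integrableOn (integrableOn_const (measure_ne_top _ _))
        measurableSet_Ico fun t ht => max_le ht.2.le hy
    rw [setIntegral_const, smul_eq_mul] at hloss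
    rw [myersonPayment_add_setIntegral_Ico hQ h, hsplit h]
    linarith

lemma integral_mul_measureReal_Iio_fst_le {Q μ ν : Measure ℝ} [IsProbabilityMeasure Q]
    (hQ : Integrable (fun t => max t 0) Q) {r : Measure (ℝ × ℝ)} [IsFiniteMeasure r]
    (hr1 : r.map Prod.fst = μ) (hr2 : r.map Prod.snd = ν) (hν0 : ∀ᵐ y ∂ν, 0 ≤ y)
    (hν : Integrable id ν) :
    ∫ p, p.2 * Q.real (Iio p.1) ∂r ≤
      ∫ y, y * Q.real (Iio y) ∂ν + (∫ x, myersonPayment Q x ∂μ - ∫ x, myersonPayment Q x ∂ν) := by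
  subst hr1 hr2
  have hGm : Measurable fun a => Q.real (Iio a) :=
    Monotone.measurable fun _ _ hab => measureReal_mono (Iio_subset_Iio hab)
  have hKm := (myersonPayment_mono hQ).measurable
  have htruth : Integrable (fun p : ℝ × ℝ => p.2 * Q.real (Iio p.2)) r :=
    (hν.mul_bdd (c := 1) hGm.aestronglyMeasurable (Eventually.of_forall fun _ => by
      rw [Real.norm_of_nonneg measureReal_nonneg]; exact measureReal_le_one)).comp_measurable
      measurable_snd
  have hK1 : Integrable (fun p : ℝ × ℝ => myersonPayment Q p.1) r :=
    (integrable_myersonPayment hQ (r.map Prod.fst)).comp_measurable measurable_fst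
  have hK2 : Integrable (fun p : ℝ × ℝ => myersonPayment Q p.2) r :=
    (integrable_myersonPayment hQ (r.map Prod.snd)).comp_measurable measurable_snd
  have hgap : Integrable (fun p : ℝ × ℝ => myersonPayment Q p.1 - myersonPayment Q p.2) r :=
    hK1.sub hK2
  have hr0 := ae_of_ae_map measurable_snd.aemeasurable hν0
  calc ∫ p, p.2 * Q.real (Iio p.1) ∂r
      ≤ ∫ p, (p.2 * Q.real (Iio p.2) + (myersonPayment Q p.1 - myersonPayment Q p.2)) ∂r :=
        integral_mono_of_nonneg (hr0.mono fun p hp => mul_nonneg hp measureReal_nonneg)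
          (htruth.add hgap) (hr0.mono fun p hp => by
            linarith [mul_measureReal_Iio_sub_myersonPayment_le hQ (a := p.1) hp])
    _ = _ := by
        rw [integral_add htruth hgap, integral_sub hK1 hK2,
          integral_map (f := fun y => y * Q.real (Iio y)) measurable_snd.aemeasurable
            (measurable_id.mul hGm).aestronglyMeasurable,
          integral_map measurable_fst.aemeasurable hKm.aestronglyMeasurable,
          integral_map measurable_snd.aemeasurable hKm.aestronglyMeasurable]

lemma integral_myersonPayment_sub_le {Q μ ν : Measure ℝ} [IsProbabilityMeasure Q]
    [IsProbabilityMeasure μ] [IsProbabilityMeasure ν] (hQ : Integrable (fun t => max t 0) Q)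
    {b Δ : ℝ} (hb : 0 ≤ b) (hΔ : 0 ≤ Δ) (hμ : μ (Iic b) = 1)
    (hclose : ∀ t, mcdf ν t - mcdf μ t ≤ Δ) :
    ∫ x, myersonPayment Q x ∂μ - ∫ x, myersonPayment Q x ∂ν ≤ b * Δ := by
  have hpointwise : ∀ t, max t 0 * (mcdf ν t - mcdf μ t) ≤ b * Δ := by
    intro t
    rcases le_or_gt (mcdf ν t - mcdf μ t) 0 with h | h
    · exact (mul_nonpos_of_nonneg_of_nonpos (le_max_right t 0) h).trans (mul_nonneg hb hΔ)
    · have ht : t ≤ b := by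
        by_contra! hbt
        linarith [mcdf_eq_one_of_le hμ hbt.le, mcdf_le_one (μ := ν) t]
      exact mul_le_mul (max_le ht hb) (hclose t) h.le hb
  have hint := integrable_measureReal_Ioi_mul hQ
  calc ∫ x, myersonPayment Q x ∂μ - ∫ x, myersonPayment Q x ∂ν
      = ∫ t, (μ.real (Ioi t) * max t 0 - ν.real (Ioi t) * max t 0) ∂Q := by
        simp only [myersonPayment]
        rw [integral_setIntegral_Iio hQ, integral_setIntegral_Iio hQ,
          integral_sub (hint μ) (hint ν)]
    _ ≤ ∫ _, b * Δ ∂Q := integral_mono ((hint μ).sub (hint ν)) (integrable_const _) fun t => by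
        simp only [measureReal_Ioi_eq_one_sub_mcdf_s9]
        linarith [hpointwise t]
    _ = b * Δ := by simp

end Payment

theorem misreport_utility_gain_bound_general
    {n : ℕ} (xbar Δ : ℝ) (lam : Fin n → ℝ) (i : Fin n)
    (Fm Fr : Measure ℝ) [IsProbabilityMeasure Fm] [IsProbabilityMeasure Fr]
    (hFsupp : Fm (Set.Icc (0 : ℝ) xbar) = 1)
    (hFrsupp : Fr (Set.Icc (0 : ℝ) xbar) = 1)
    (hFcont : Continuous (mcdf Fm))
    (hclose : ∀ x, |mcdf Fm x - mcdf Fr x| ≤ Δ)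
    (r : Measure (ℝ × ℝ)) [IsProbabilityMeasure r]
    (hr1 : r.map Prod.fst = Fr) (hr2 : r.map Prod.snd = Fm) :
    (∫ p : ℝ × ℝ, p.2 * ∏ j ∈ Finset.univ.erase i, mcdf Fm (p.1 + lam i - lam j) ∂r) -
        (∫ x, x * ∏ j ∈ Finset.univ.erase i, mcdf Fm (x + lam i - lam j) ∂Fm) ≤
      xbar * Δ := by
  have hFae : ∀ᵐ x ∂Fm, x ∈ Icc 0 xbar :=
    (ae_iff_prob_eq_one (measurableSet_setOfPred.1 measurableSet_Icc)).2 hFsupp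
  obtain ⟨x₀, hx₀⟩ := hFae.exists
  have hxbar : 0 ≤ xbar := hx₀.1.trans hx₀.2
  have hΔ0 : 0 ≤ Δ := (abs_nonneg _).trans (hclose 0)
  have hFint : Integrable id Fm := Integrable.of_bound measurable_id.aestronglyMeasurable xbar
    (hFae.mono fun x hx => by rw [id, Real.norm_of_nonneg hx.1]; exact hx.2)
  rcases (Finset.univ.erase i).eq_empty_or_nonempty with hE | ⟨j₀, hj₀⟩
  · simp only [hE, Finset.prod_empty, mul_one]
    rw [← hr2, integral_map (f := fun x => x) measurable_snd.aemeasurable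
      aestronglyMeasurable_id, sub_self]
    exact mul_nonneg hxbar hΔ0
  have : Nonempty (Finset.univ.erase i) := ⟨⟨j₀, hj₀⟩⟩
  set Q := supShiftLaw (fun _ : Finset.univ.erase i => Fm) fun j => lam i - lam j
  have hG : ∀ x, ∏ j ∈ Finset.univ.erase i, mcdf Fm (x + lam i - lam j) = Q.real (Iio x) := by
    intro x
    rw [measureReal_Iio_eq_mcdf_s9 (continuous_mcdf_supShiftLaw _ _ fun _ => hFcont).continuousAt,
      mcdf_supShiftLaw]
    simp_rw [add_sub_assoc]
    exact (Finset.prod_coe_sort _ fun j => mcdf Fm (x + (lam i - lam j))).symm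
  have hQint := integrable_max_zero_supShiftLaw (fun _ : Finset.univ.erase i => Fm)
    (fun j => lam i - lam j) fun _ => prob_Iic_eq_one_of_prob_Icc_eq_one hFsupp
  simp only [hG]
  have hgain :=
    integral_mul_measureReal_Iio_fst_le hQint hr1 hr2 (hFae.mono fun _ h => h.1) hFint
  have hpay := integral_myersonPayment_sub_le hQint hxbar hΔ0
    (prob_Iic_eq_one_of_prob_Icc_eq_one hFrsupp) fun t => (le_abs_self _).trans (hclose t)
  linarith

/-- **One-round utility gain from misreporting is at most `x̄ Δ`.**
Fix a greedy policy `λ`, an agent `i`, and `Δ > 0`.  `F` is the continuous common value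
distribution on `[0,x̄]`.  If `r` is a joint law of (report, true value) on `[0,x̄]²` whose
second marginal has CDF `F` and whose first marginal `F_r` satisfies
`sup_x |F(x) − F_r(x)| ≤ Δ`, then
`∫ x ∏_{j≠i} F(x̃ + λᵢ − λⱼ) dr(x̃,x) − ∫ x ∏_{j≠i} F(x + λᵢ − λⱼ) dF(x) ≤ x̄ Δ`. -/
theorem misreport_utility_gain_bound
    {n : ℕ} (xbar Δ : ℝ) (hΔ : 0 < Δ) (lam : Fin n → ℝ) (i : Fin n)
    (Fm Fr : Measure ℝ) [IsProbabilityMeasure Fm] [IsProbabilityMeasure Fr]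
    (hFsupp : Fm (Set.Icc (0 : ℝ) xbar) = 1)
    (hFrsupp : Fr (Set.Icc (0 : ℝ) xbar) = 1)
    (hFcont : Continuous (mcdf Fm))
    (hclose : ∀ x, |mcdf Fm x - mcdf Fr x| ≤ Δ)
    (r : Measure (ℝ × ℝ)) [IsProbabilityMeasure r]
    (hr1 : r.map Prod.fst = Fr) (hr2 : r.map Prod.snd = Fm) :
    (∫ p : ℝ × ℝ, p.2 * ∏ j ∈ Finset.univ.erase i, mcdf Fm (p.1 + lam i - lam j) ∂r) -
        (∫ x, x * ∏ j ∈ Finset.univ.erase i, mcdf Fm (x + lam i - lam j) ∂Fm) ≤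
      xbar * Δ :=
  misreport_utility_gain_bound_general xbar Δ lam i Fm Fr hFsupp hFrsupp hFcont hclose r hr1 hr2
end
end
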